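/- In the split graph G of the geodetic-set construction, if T is a minimal transversal of 𝓗, then T ∪ I is a minimal geodetic set of G, where I = H ∪ {e*}. -/
import Mathlib


namespace GeoConstr

/-! ## The geodetic-set construction

Given a hypergraph `ℋ` with vertex set `{v_1, …, v_n}` (encoded as `Fin n`) and edge set
`E_1, …, E_m` (encoded as `E : Fin m → Set (Fin n)`), with `n, m ≥ 1` and no vertex of `ℋ`
belonging to every edge, we build the split graph `G` of the reduction from Trans-Enum to
MinGeodetic on split graphs.  Vertex `v_i` of the paper is `GVert.v ⟨i-1⟩`, `e_j` is
`GVert.e ⟨j-1⟩`, `u_j` is `GVert.u ⟨j-1⟩`, and `e*`, `u*` are `GVert.estar`, `GVert.ustar`. -/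

inductive GVert (n m : ℕ) : Type
  | v : Fin n → GVert n m
  | e : Fin m → GVert n m
  | u : Fin m → GVert n m
  | estar : GVert n m
  | ustar : GVert n m

variable {n m : ℕ}

/-- The base (one-sided) adjacency relation of the construction; the graph is obtained by
symmetrizing it. -/
def baseRel (E : Fin m → Set (Fin n)) : GVert n m → GVert n m → Prop
  | .v _, .v _ => True            -- U ∪ V is a clique
  | .u _, .u _ => True
  | .v _, .u _ => True
  | .v i, .e j => i ∉ E j         -- non-incidence between V and H
  | .u j, .e j' => j = j'         -- u_j is adjacent to e_j and to no other vertex of H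
  | .estar, .v _ => True          -- e* is adjacent to every vertex of V
  | .ustar, .ustar => False
  | .ustar, _ => True             -- u* is adjacent to every other vertex of G
  | _, _ => False

/-- The split graph `G` of the geodetic-set construction. -/
def G (E : Fin m → Set (Fin n)) : SimpleGraph (GVert n m) :=
  SimpleGraph.fromRel (baseRel E)

/-- `z` lies on some shortest `x`–`y` path in `G`. -/
def LiesOnShortestPath {α : Type*} (G : SimpleGraph α) (x y z : α) : Prop :=
  ∃ pth : G.Walk x y, pth.IsPath ∧ pth.length = G.dist x y ∧ z ∈ pth.support

/-- `S` is a geodetic set of `G`: every vertex is covered by some pair of vertices of `S`. -/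
def IsGeodeticSet {α : Type*} (G : SimpleGraph α) (S : Set α) : Prop :=
  ∀ z : α, ∃ x ∈ S, ∃ y ∈ S, LiesOnShortestPath G x y z

/-- `S` is an inclusion-wise minimal geodetic set of `G`. -/
def IsMinimalGeodeticSet {α : Type*} (G : SimpleGraph α) (S : Set α) : Prop :=
  IsGeodeticSet G S ∧ ∀ S' : Set α, S' ⊂ S → ¬ IsGeodeticSet G S'

/-- `T` is a transversal of the hypergraph with edges `E j`. -/
def IsTransversal (E : Fin m → Set (Fin n)) (T : Set (Fin n)) : Prop :=
  ∀ j : Fin m, (T ∩ E j).Nonempty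

/-- `T` is an inclusion-wise minimal transversal of the hypergraph with edges `E j`. -/
def IsMinimalTransversal (E : Fin m → Set (Fin n)) (T : Set (Fin n)) : Prop :=
  IsTransversal E T ∧ ∀ T' : Set (Fin n), T' ⊂ T → ¬ IsTransversal E T'

/-- The independent set `I = H ∪ {e*}` of the split graph `G`. -/
def Iset : Set (GVert n m) := Set.range (GVert.e : Fin m → GVert n m) ∪ {GVert.estar}

/-- The clique `K = U ∪ V ∪ {u*}` of the split graph `G`. -/
def Kset : Set (GVert n m) :=
  Set.range (GVert.u : Fin m → GVert n m) ∪ Set.range (GVert.v : Fin n → GVert n m) ∪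
    {GVert.ustar}

section Aux

variable (E : Fin m → Set (Fin n))

lemma adj_iff {x y : GVert n m} :
    (G E).Adj x y ↔ x ≠ y ∧ (baseRel E x y ∨ baseRel E y x) :=
  Iff.rfl

lemma adj_ustar {x : GVert n m} (h : x ≠ GVert.ustar) : (G E).Adj GVert.ustar x := by
  refine ⟨Ne.symm h, Or.inl ?_⟩
  cases x <;> simp_all [baseRel]

lemma adj_vv {i i' : Fin n} (h : i ≠ i') : (G E).Adj (GVert.v i) (GVert.v i') := by
  exact ⟨by simpa using h, Or.inl trivial⟩

lemma adj_vu {i : Fin n} {j : Fin m} : (G E).Adj (GVert.v i) (GVert.u j) :=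
  ⟨by simp, Or.inl trivial⟩

lemma adj_ve {i : Fin n} {j : Fin m} : (G E).Adj (GVert.v i) (GVert.e j) ↔ i ∉ E j := by
  constructor
  · rintro ⟨-, h | h⟩ <;> simpa [baseRel] using h
  · intro h; exact ⟨by simp, Or.inl h⟩

lemma adj_ue {j j' : Fin m} : (G E).Adj (GVert.u j) (GVert.e j') ↔ j = j' := by
  constructor
  · rintro ⟨-, h | h⟩ <;> simpa [baseRel] using h
  · rintro rfl; exact ⟨by simp, Or.inl rfl⟩

lemma adj_estar_v {i : Fin n} : (G E).Adj GVert.estar (GVert.v i) :=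
  ⟨by simp, Or.inl trivial⟩

lemma not_adj_estar_e {j : Fin m} : ¬ (G E).Adj GVert.estar (GVert.e j) := by
  rintro ⟨-, h | h⟩ <;> simpa [baseRel] using h

lemma not_adj_estar_u {j : Fin m} : ¬ (G E).Adj GVert.estar (GVert.u j) := by
  rintro ⟨-, h | h⟩ <;> simpa [baseRel] using h

lemma not_adj_ee {j j' : Fin m} : ¬ (G E).Adj (GVert.e j) (GVert.e j') := by
  rintro ⟨-, h | h⟩ <;> simpa [baseRel] using h

/-- Every pair of vertices is at distance at most 2. -/
lemma dist_le_two (x y : GVert n m) : (G E).dist x y ≤ 2 := by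
  by_cases hxy : x = y
  · simp [hxy, SimpleGraph.dist_self]
  by_cases hx : x = GVert.ustar
  · subst hx
    exact le_trans ((G E).dist_le ((adj_ustar E (Ne.symm hxy)).toWalk)) (by norm_num)
  by_cases hy : y = GVert.ustar
  · subst hy
    exact le_trans ((G E).dist_le ((adj_ustar E hx).symm.toWalk)) (by norm_num)
  · exact (G E).dist_le (SimpleGraph.Walk.cons ((adj_ustar E hx).symm)
      (SimpleGraph.Walk.cons (adj_ustar E hy) SimpleGraph.Walk.nil))

/-- If `x` and `y` are distinct nonadjacent neighbors of `z`, then `z` lies on a shortest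
`x`–`y` path. -/
lemma cover_pair {x y z : GVert n m} (hxz : (G E).Adj x z) (hzy : (G E).Adj z y)
    (hxy : ¬ (G E).Adj x y) (hne : x ≠ y) : LiesOnShortestPath (G E) x y z := by
  refine ⟨SimpleGraph.Walk.cons hxz (SimpleGraph.Walk.cons hzy SimpleGraph.Walk.nil), ?_, ?_, ?_⟩
  · simp [SimpleGraph.Walk.isPath_def, hne, hxz.ne, hzy.ne, Ne.symm hzy.ne]
  · have h2 : (G E).dist x y ≤ 2 := (G E).dist_le
      (SimpleGraph.Walk.cons hxz (SimpleGraph.Walk.cons hzy SimpleGraph.Walk.nil))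
    have hreach : (G E).Reachable x y := ⟨SimpleGraph.Walk.cons hxz hzy.toWalk⟩
    have h0 : 0 < (G E).dist x y := hreach.pos_dist_of_ne hne
    have h1 : (G E).dist x y ≠ 1 := fun h => hxy (SimpleGraph.dist_eq_one_iff_adj.mp h)
    simp only [SimpleGraph.Walk.length_cons, SimpleGraph.Walk.length_nil]
    omega
  · simp

lemma cover_self (z : GVert n m) : LiesOnShortestPath (G E) z z z :=
  ⟨SimpleGraph.Walk.nil, SimpleGraph.Walk.IsPath.nil, by simp [SimpleGraph.dist_self], by simp⟩

/-- Structure of shortest-path coverage in a graph of diameter at most 2. -/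
lemma liesOn_cases {x y z : GVert n m} (h : LiesOnShortestPath (G E) x y z) :
    z = x ∨ z = y ∨ ∃ w, z = w ∧ (G E).Adj x w ∧ (G E).Adj w y ∧ ¬ (G E).Adj x y ∧ x ≠ y := by
  obtain ⟨p, hp, hlen, hmem⟩ := h
  have hle : p.length ≤ 2 := hlen ▸ dist_le_two E x y
  cases p with
  | nil => left; simpa using hmem
  | cons h1 q =>
    cases q with
    | nil =>
      simp only [SimpleGraph.Walk.support_cons, SimpleGraph.Walk.support_nil,
        List.mem_cons, List.mem_singleton] at hmem
      rcases hmem with rfl | rfl | h' <;> simp_all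
    | cons h2 r =>
      cases r with
      | nil =>
        simp only [SimpleGraph.Walk.support_cons, SimpleGraph.Walk.support_nil,
          List.mem_cons, List.mem_singleton] at hmem
        have hlen2 : (G E).dist x y = 2 := by
          simpa using hlen.symm
        have hnadj : ¬ (G E).Adj x y := by
          intro hadj
          have := SimpleGraph.dist_eq_one_iff_adj.mpr hadj
          omega
        have hne : x ≠ y := by
          rintro rfl
          rw [SimpleGraph.dist_self] at hlen2
          omega
        rcases hmem with rfl | rfl | rfl | h'
        · left; rfl
        · right; right; exact ⟨z, rfl, h1, h2, hnadj, hne⟩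
        · right; left; rfl
        · simp at h'
      | cons h3 s =>
        simp only [SimpleGraph.Walk.length_cons] at hle
        omega

end Aux

lemma mem_S_cases {T : Set (Fin n)} {x : GVert n m}
    (hx : x ∈ ((GVert.v : Fin n → GVert n m) '' T ∪ Iset)) :
    (∃ t ∈ T, x = GVert.v t) ∨ (∃ j, x = GVert.e j) ∨ x = GVert.estar := by
  rcases hx with ⟨t, htT, rfl⟩ | (⟨j, rfl⟩ | h)
  · exact Or.inl ⟨t, htT, rfl⟩
  · exact Or.inr (Or.inl ⟨j, rfl⟩)
  · exact Or.inr (Or.inr h)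

lemma u_notMem_S {T : Set (Fin n)} {j : Fin m} :
    GVert.u j ∉ ((GVert.v : Fin n → GVert n m) '' T ∪ Iset) := by
  intro h
  rcases mem_S_cases h with ⟨t, -, h⟩ | (⟨j', h⟩ | h) <;> simp at h

/-- In the split graph `G` of the geodetic-set construction, if `T` is a minimal transversal
of `ℋ`, then `T ∪ I` is a minimal geodetic set of `G`. -/
theorem transversal_gives_minimal_geodetic
    (E : Fin m → Set (Fin n)) (hn : 1 ≤ n) (hm : 1 ≤ m)
    (hE : ∀ i : Fin n, ∃ j : Fin m, i ∉ E j)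
    (T : Set (Fin n)) (hT : IsMinimalTransversal E T) :
    IsMinimalGeodeticSet (G E) ((GVert.v : Fin n → GVert n m) '' T ∪ Iset) := by
  set S : Set (GVert n m) := (GVert.v : Fin n → GVert n m) '' T ∪ Iset with hS
  have heS : ∀ j : Fin m, GVert.e j ∈ S := fun j => by simp [hS, Iset]
  have hestarS : GVert.estar ∈ S := by simp [hS, Iset]
  have hvS : ∀ t ∈ T, GVert.v t ∈ S := fun t ht => Or.inl ⟨t, ht, rfl⟩
  constructor
  · -- geodetic
    intro z
    cases z with
    | v i =>
      obtain ⟨j, hj⟩ := hE i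
      exact ⟨GVert.e j, heS j, GVert.estar, hestarS,
        cover_pair E ((adj_ve E).mpr hj).symm (adj_estar_v E).symm
          (not_adj_estar_e E ∘ SimpleGraph.Adj.symm) (by simp)⟩
    | e j => exact ⟨GVert.e j, heS j, GVert.e j, heS j, cover_self E _⟩
    | u j =>
      obtain ⟨t, htT, htE⟩ := hT.1 j
      refine ⟨GVert.e j, heS j, GVert.v t, hvS t htT,
        cover_pair E ((adj_ue E).mpr rfl).symm (adj_vu E).symm ?_ (by simp)⟩
      intro h
      exact (adj_ve E).mp h.symm htE
    | estar => exact ⟨GVert.estar, hestarS, GVert.estar, hestarS, cover_self E _⟩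
    | ustar =>
      exact ⟨GVert.estar, hestarS, GVert.e ⟨0, hm⟩, heS _,
        cover_pair E (adj_ustar E (by simp)).symm (adj_ustar E (by simp))
          (not_adj_estar_e E) (by simp)⟩
  · -- minimality
    intro S' hS' hgeo
    obtain ⟨s, hsS, hsS'⟩ := Set.exists_of_ssubset hS'
    have hsub : S' ⊆ S := hS'.1
    rcases mem_S_cases hsS with ⟨t, htT, rfl⟩ | (⟨j, rfl⟩ | rfl)
    · -- s = v t : u j uncovered, where (T \ {t}) ∩ E j = ∅
      have hTt : T \ {t} ⊂ T := Set.sdiff_singleton_ssubset.mpr htT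
      have hnt := hT.2 _ hTt
      rw [IsTransversal] at hnt
      push_neg at hnt
      obtain ⟨j, hj⟩ := hnt
      have hmissE : ∀ t' ∈ T, t' ≠ t → t' ∉ E j := by
        intro t' ht' hne hE'
        have hmem : t' ∈ T \ {t} ∩ E j := ⟨⟨ht', hne⟩, hE'⟩
        simp [hj] at hmem
      obtain ⟨x, hx, y, hy, hcov⟩ := hgeo (GVert.u j)
      have huS' : (GVert.u j : GVert n m) ∉ S' := fun h => u_notMem_S (hsub h)
      rcases liesOn_cases E hcov with h | h | ⟨w, hw, hxw, hwy, hnxy, hne⟩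
      · exact huS' (h ▸ hx)
      · exact huS' (h ▸ hy)
      · subst hw
        -- classify a neighbor of u j inside S'
        have key : ∀ a ∈ S', (G E).Adj a (GVert.u j) →
            (∃ t' ∈ T, t' ≠ t ∧ a = GVert.v t') ∨ a = GVert.e j := by
          intro a ha hadj
          rcases mem_S_cases (hsub ha) with ⟨t', ht', rfl⟩ | (⟨j', rfl⟩ | rfl)
          · refine Or.inl ⟨t', ht', fun h => ?_, rfl⟩
            exact hsS' (h ▸ ha)
          · exact Or.inr (congrArg GVert.e ((adj_ue E).mp hadj.symm).symm)
          · exact absurd hadj (not_adj_estar_u E)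
        rcases key x hx hxw with ⟨t', ht', htne, rfl⟩ | rfl <;>
          rcases key y hy hwy.symm with ⟨t'', ht'', htne', rfl⟩ | rfl
        · exact hnxy (adj_vv E (by simpa using hne))
        · exact hnxy ((adj_ve E).mpr (hmissE t' ht' htne))
        · exact hnxy (((adj_ve E).mpr (hmissE t'' ht'' htne')).symm)
        · exact hne rfl
    · -- s = e j : u j uncovered
      obtain ⟨x, hx, y, hy, hcov⟩ := hgeo (GVert.u j)
      have huS' : (GVert.u j : GVert n m) ∉ S' := fun h => u_notMem_S (hsub h)
      rcases liesOn_cases E hcov with h | h | ⟨w, hw, hxw, hwy, hnxy, hne⟩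
      · exact huS' (h ▸ hx)
      · exact huS' (h ▸ hy)
      · subst hw
        have key : ∀ a ∈ S', (G E).Adj a (GVert.u j) → ∃ t', a = GVert.v t' := by
          intro a ha hadj
          rcases mem_S_cases (hsub ha) with ⟨t', -, rfl⟩ | (⟨j', rfl⟩ | rfl)
          · exact ⟨t', rfl⟩
          · have : j' = j := ((adj_ue E).mp hadj.symm).symm
            exact absurd (this ▸ ha) hsS'
          · exact absurd hadj (not_adj_estar_u E)
        obtain ⟨t', rfl⟩ := key x hx hxw
        obtain ⟨t'', rfl⟩ := key y hy hwy.symm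
        exact hnxy (adj_vv E (by simpa using hne))
    · -- s = estar : estar uncovered
      obtain ⟨x, hx, y, hy, hcov⟩ := hgeo GVert.estar
      rcases liesOn_cases E hcov with h | h | ⟨w, hw, hxw, hwy, hnxy, hne⟩
      · exact hsS' (h ▸ hx)
      · exact hsS' (h ▸ hy)
      · subst hw
        have key : ∀ a ∈ S', (G E).Adj a GVert.estar → ∃ t', a = GVert.v t' := by
          intro a ha hadj
          rcases mem_S_cases (hsub ha) with ⟨t', -, rfl⟩ | (⟨j', rfl⟩ | rfl)
          · exact ⟨t', rfl⟩
          · exact absurd hadj.symm (not_adj_estar_e E)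
          · exact absurd ha hsS'
        obtain ⟨t', rfl⟩ := key x hx hxw
        obtain ⟨t'', rfl⟩ := key y hy hwy.symm
        exact hnxy (adj_vv E (by simpa using hne))

end GeoConstr
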